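/- Let X be a random variable with values in ℝ^d and Y a random vector in ℝ^m with each Y_i square-integrable, on the same probability space, and λ > 0. For each i = 1,…,m let ξ_i : ℝ^d → ℝ be measurable with ξ_i(X) = 𝔼[Y_i | X] almost surely. Define E* : ℝ^d → ℝ^k (k ≥ m) by E*_i(x) = ξ_i(x) for i ≤ m and E*_i(x) = 0 for i > m, and let ν* be the law of (X, E*(X)) on ℝ^d × ℝ^k. Then for every measurable E : ℝ^d → ℝ^k with each E_i(X) square-integrable and every probability measure ν on ℝ^d × ℝ^k: KL(law(X, E(X)), ν) + λ·Σ_{i=1}^m 𝔼[(E_i(X) − Y_i)²] ≥ KL(law(X, E*(X)), ν*) + λ·Σ_{i=1}^m 𝔼[(ξ_i(X) − Y_i)²]. In particular (E*, ν*) is a global minimizer of the objective, and E* is disentangled w.r.t. ξ with g_i the identity. -/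

import Mathlib

/-!
The candidate `ν* = law(X, E*(X))` makes the KL term vanish, so it remains to compare the
reconstruction terms coordinatewise. Each `Eᵢ(X)` is `σ(X)`-measurable, and `𝔼[Yᵢ | X] - Yᵢ` is
orthogonal in `L²` to every `σ(X)`-measurable function, so Pythagoras gives
`𝔼[(Eᵢ(X) - Yᵢ)²] = 𝔼[(Eᵢ(X) - 𝔼[Yᵢ | X])²] + 𝔼[(𝔼[Yᵢ | X] - Yᵢ)²] ≥ 𝔼[(ξᵢ(X) - Yᵢ)²]`.
-/

open MeasureTheory ProbabilityTheory
open scoped Classical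

/-- Kullback–Leibler divergence `KL(μ, ν) = ∫ log(dμ/dν) dμ`, equal to `+∞` when `μ` is not
absolutely continuous with respect to `ν` (or when the log-likelihood ratio is not integrable). -/
noncomputable def klDiv {α : Type*} [MeasurableSpace α] (μ ν : Measure α) : ENNReal :=
  if μ ≪ ν ∧ Integrable (llr μ ν) μ then ENNReal.ofReal (∫ x, llr μ ν x ∂μ) else ⊤

lemma klDiv_self {α : Type*} [MeasurableSpace α] (μ : Measure α) [SigmaFinite μ] :
    klDiv μ μ = 0 := by
  have hllr : llr μ μ =ᵐ[μ] 0 := by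
    filter_upwards [μ.rnDeriv_self] with x hx
    simp [llr, hx]
  rw [klDiv, if_pos ⟨.rfl, (integrable_congr hllr).mpr (integrable_zero _ _ _)⟩,
    integral_congr_ae hllr]
  simp

section CondExpL2

variable {Ω : Type*} {m m₀ : MeasurableSpace Ω} {μ : Measure Ω} [IsFiniteMeasure μ]
  {f g Z : Ω → ℝ}

lemma integral_mul_condExp_of_aestronglyMeasurable (hm : m ≤ m₀)
    (hgm : AEStronglyMeasurable[m] g μ) (hg : MemLp g 2 μ) (hZ : MemLp Z 2 μ) :
    ∫ ω, g ω * μ[Z|m] ω ∂μ = ∫ ω, g ω * Z ω ∂μ :=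
  calc ∫ ω, g ω * μ[Z|m] ω ∂μ = ∫ ω, μ[g * Z|m] ω ∂μ :=
        integral_congr_ae (condExp_mul_of_aestronglyMeasurable_left hgm
          (hg.integrable_mul hZ) (hZ.integrable one_le_two)).symm
    _ = ∫ ω, g ω * Z ω ∂μ := integral_condExp hm

lemma integral_sq_sub_eq_integral_sq_sub_condExp_add (hm : m ≤ m₀)
    (hfm : AEStronglyMeasurable[m] f μ) (hf : MemLp f 2 μ) (hZ : MemLp Z 2 μ) :
    ∫ ω, (f ω - Z ω) ^ 2 ∂μ
      = ∫ ω, (f ω - μ[Z|m] ω) ^ 2 ∂μ + ∫ ω, (μ[Z|m] ω - Z ω) ^ 2 ∂μ := by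
  set c := μ[Z|m]
  have hc : MemLp c 2 μ := hZ.condExp one_le_two
  have hfc : MemLp (f - c) 2 μ := hf.sub hc
  have hcross : ∫ ω, (f ω - c ω) * (c ω - Z ω) ∂μ = 0 := by
    have hfcc : Integrable (fun ω => (f ω - c ω) * c ω) μ := hfc.integrable_mul hc
    have hfcZ : Integrable (fun ω => (f ω - c ω) * Z ω) μ := hfc.integrable_mul hZ
    simp only [mul_sub]
    rw [integral_sub hfcc hfcZ, sub_eq_zero]
    exact integral_mul_condExp_of_aestronglyMeasurable hm
      (hfm.sub stronglyMeasurable_condExp.aestronglyMeasurable) hfc hZ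
  have hfc_sq : Integrable (fun ω => (f ω - c ω) ^ 2) μ := hfc.integrable_sq
  have hcZ_sq : Integrable (fun ω => (c ω - Z ω) ^ 2) μ := (hc.sub hZ).integrable_sq
  have hcross_int : Integrable (fun ω => 2 * ((f ω - c ω) * (c ω - Z ω))) μ :=
    (hfc.integrable_mul (hc.sub hZ)).const_mul 2
  calc ∫ ω, (f ω - Z ω) ^ 2 ∂μ
      = ∫ ω, (f ω - c ω) ^ 2 + 2 * ((f ω - c ω) * (c ω - Z ω)) + (c ω - Z ω) ^ 2 ∂μ :=
        integral_congr_ae (.of_forall fun ω => by ring)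
    _ = ∫ ω, (f ω - c ω) ^ 2 ∂μ + ∫ ω, (c ω - Z ω) ^ 2 ∂μ := by
        have hsum : Integrable
            (fun ω => (f ω - c ω) ^ 2 + 2 * ((f ω - c ω) * (c ω - Z ω))) μ :=
          hfc_sq.add hcross_int
        rw [integral_add hsum hcZ_sq,
          integral_add hfc_sq hcross_int, integral_const_mul, hcross, mul_zero, add_zero]

lemma integral_sq_condExp_sub_le (hm : m ≤ m₀)
    (hfm : AEStronglyMeasurable[m] f μ) (hf : MemLp f 2 μ) (hZ : MemLp Z 2 μ) :
    ∫ ω, (μ[Z|m] ω - Z ω) ^ 2 ∂μ ≤ ∫ ω, (f ω - Z ω) ^ 2 ∂μ := by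
  rw [integral_sq_sub_eq_integral_sq_sub_condExp_add hm hfm hf hZ]
  exact le_add_of_nonneg_left (integral_nonneg fun ω => sq_nonneg _)

end CondExpL2

theorem DEAR_identifiability_L2_general
    {Ω : Type*} [MeasurableSpace Ω] (μ : Measure Ω) [IsProbabilityMeasure μ]
    {d m k : ℕ} (hmk : m ≤ k)
    (X : Ω → (Fin d → ℝ)) (hX : Measurable X)
    (Y : Ω → (Fin m → ℝ))
    (hY2 : ∀ i : Fin m, MemLp (fun ω => Y ω i) 2 μ)
    (lam : ℝ) (hlam : 0 < lam)
    (ξ : Fin m → (Fin d → ℝ) → ℝ)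
    (hcond : ∀ i, (fun ω => ξ i (X ω))
      =ᵐ[μ] μ[fun ω => Y ω i | MeasurableSpace.comap X inferInstance])
    (Estar : (Fin d → ℝ) → (Fin k → ℝ))
    (hEstar : ∀ x (i : Fin k),
      Estar x i = if h : (i : ℕ) < m then ξ ⟨i, h⟩ x else 0) :
    (∀ (E : (Fin d → ℝ) → (Fin k → ℝ)), Measurable E →
      (∀ i : Fin m, MemLp (fun ω => E (X ω) (Fin.castLE hmk i)) 2 μ) →
      ∀ (ν : Measure ((Fin d → ℝ) × (Fin k → ℝ))), IsProbabilityMeasure ν →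
        klDiv (Measure.map (fun ω => (X ω, Estar (X ω))) μ)
            (Measure.map (fun ω => (X ω, Estar (X ω))) μ)
          + ENNReal.ofReal
              (lam * ∑ i : Fin m, ∫ ω, (ξ i (X ω) - Y ω i) ^ 2 ∂μ)
        ≤ klDiv (Measure.map (fun ω => (X ω, E (X ω))) μ) ν
          + ENNReal.ofReal
              (lam * ∑ i : Fin m, ∫ ω, (E (X ω) (Fin.castLE hmk i) - Y ω i) ^ 2 ∂μ))
    ∧ ∀ i : Fin m, Function.Injective (id : ℝ → ℝ)
        ∧ ∀ x, Estar x (Fin.castLE hmk i) = id (ξ i x) := by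
  refine ⟨fun E hE hE2 ν _ => ?_, fun i => ⟨Function.injective_id, fun x => by simp [hEstar]⟩⟩
  rw [klDiv_self, zero_add]
  refine le_add_left (ENNReal.ofReal_le_ofReal
    (mul_le_mul_of_nonneg_left (Finset.sum_le_sum fun i _ => ?_) hlam.le))
  have hEX : StronglyMeasurable[MeasurableSpace.comap X inferInstance]
      fun ω => E (X ω) (Fin.castLE hmk i) :=
    ((measurable_pi_apply _).comp hE |>.comp (comap_measurable X)).stronglyMeasurable
  calc ∫ ω, (ξ i (X ω) - Y ω i) ^ 2 ∂μ
      = ∫ ω, (μ[fun ω => Y ω i | MeasurableSpace.comap X inferInstance] ω - Y ω i) ^ 2 ∂μ :=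
        integral_congr_ae (by filter_upwards [hcond i] with ω h; rw [h])
    _ ≤ _ := integral_sq_condExp_sub_le hX.comap_le hEX.aestronglyMeasurable (hE2 i) (hY2 i)

/-- Theorem 1 of the paper, L2 case. With `E*_i = ξ_i` a version of `𝔼[Y_i|X]`
for `i ≤ m` (and `0` otherwise) and `ν*` the law of `(X, E*(X))`, the pair `(E*, ν*)` is a global
minimizer of `KL(law(X,E(X)), ν) + λ·Σᵢ 𝔼[(Eᵢ(X) − Yᵢ)²]`; in particular `E*` is disentangled
w.r.t. `ξ` with `g_i` the identity. -/
theorem DEAR_identifiability_L2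
    {Ω : Type*} [MeasurableSpace Ω] (μ : Measure Ω) [IsProbabilityMeasure μ]
    {d m k : ℕ} (hmk : m ≤ k)
    (X : Ω → (Fin d → ℝ)) (hX : Measurable X)
    (Y : Ω → (Fin m → ℝ)) (hY : Measurable Y)
    (hY2 : ∀ i : Fin m, MemLp (fun ω => Y ω i) 2 μ)
    (lam : ℝ) (hlam : 0 < lam)
    (ξ : Fin m → (Fin d → ℝ) → ℝ) (hξ : ∀ i, Measurable (ξ i))
    (hcond : ∀ i, (fun ω => ξ i (X ω))
      =ᵐ[μ] μ[fun ω => Y ω i | MeasurableSpace.comap X inferInstance])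
    (Estar : (Fin d → ℝ) → (Fin k → ℝ))
    (hEstar : ∀ x (i : Fin k),
      Estar x i = if h : (i : ℕ) < m then ξ ⟨i, h⟩ x else 0) :
    (∀ (E : (Fin d → ℝ) → (Fin k → ℝ)), Measurable E →
      (∀ i : Fin m, MemLp (fun ω => E (X ω) (Fin.castLE hmk i)) 2 μ) →
      ∀ (ν : Measure ((Fin d → ℝ) × (Fin k → ℝ))), IsProbabilityMeasure ν →
        klDiv (Measure.map (fun ω => (X ω, Estar (X ω))) μ)
            (Measure.map (fun ω => (X ω, Estar (X ω))) μ)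
          + ENNReal.ofReal
              (lam * ∑ i : Fin m, ∫ ω, (ξ i (X ω) - Y ω i) ^ 2 ∂μ)
        ≤ klDiv (Measure.map (fun ω => (X ω, E (X ω))) μ) ν
          + ENNReal.ofReal
              (lam * ∑ i : Fin m, ∫ ω, (E (X ω) (Fin.castLE hmk i) - Y ω i) ^ 2 ∂μ))
    ∧ ∀ i : Fin m, Function.Injective (id : ℝ → ℝ)
        ∧ ∀ x, Estar x (Fin.castLE hmk i) = id (ξ i x) :=
  DEAR_identifiability_L2_general μ hmk X hX Y hY2 lam hlam ξ hcond Estar hEstar
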